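/- Let (E',F') →f (E,F) →g (E'',F'') be an admissible exact sequence of X-filtered R-modules in which f and g are boundedly bicontrolled of filtration degree ≤ b. If F' is D-lean and F is d-insular, then F'' is (4b + D + d)-insular. -/

import Mathlib

open Set Metric

/-- The metric `D`-enlargement `S[D]` of a subset `S` of a metric space `X`. -/
def enl {X : Type*} [MetricSpace X] (S : Set X) (D : ℝ) : Set X :=
  {x : X | ∃ s ∈ S, dist x s ≤ D}

/-- `F` is an `X`-filtration of the `R`-module `M`: a monotone assignment of submodules
with `F ∅ = 0` and `F X = M`. -/
def IsXFiltration {R X M : Type*} [Ring R] [MetricSpace X] [AddCommGroup M] [Module R M]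
    (F : Set X → Submodule R M) : Prop :=
  Monotone F ∧ F (∅ : Set X) = ⊥ ∧ F Set.univ = ⊤

/-- `f` is boundedly controlled with bound `D`: `f(F₁(S)) ⊆ F₂(S[D])` for all `S`. -/
def BddCtrl {R X M₁ M₂ : Type*} [Ring R] [MetricSpace X]
    [AddCommGroup M₁] [Module R M₁] [AddCommGroup M₂] [Module R M₂]
    (F₁ : Set X → Submodule R M₁) (F₂ : Set X → Submodule R M₂)
    (f : M₁ →ₗ[R] M₂) (D : ℝ) : Prop :=
  ∀ S : Set X, (F₁ S).map f ≤ F₂ (enl S D)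

/-- `f` is boundedly bicontrolled of filtration degree `≤ D`: in addition to being
boundedly controlled with bound `D`, `range(f) ∩ F₂(S) ⊆ f(F₁(S[D]))` for all `S`. -/
def BddBictrl {R X M₁ M₂ : Type*} [Ring R] [MetricSpace X]
    [AddCommGroup M₁] [Module R M₁] [AddCommGroup M₂] [Module R M₂]
    (F₁ : Set X → Submodule R M₁) (F₂ : Set X → Submodule R M₂)
    (f : M₁ →ₗ[R] M₂) (D : ℝ) : Prop :=
  BddCtrl F₁ F₂ f D ∧
    ∀ S : Set X, LinearMap.range f ⊓ F₂ S ≤ (F₁ (enl S D)).map f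

/-- `(M, F)` is `D`-lean: `F(S)` is contained in the sum of the `F(B_D(x))` over `x ∈ S`. -/
def IsLean {R X M : Type*} [Ring R] [MetricSpace X] [AddCommGroup M] [Module R M]
    (F : Set X → Submodule R M) (D : ℝ) : Prop :=
  ∀ S : Set X, F S ≤ ⨆ x ∈ S, F (Metric.closedBall x D)

/-- `(M, F)` is `d`-insular: `F(T) ∩ F(U) ⊆ F(T[d] ∩ U[d])` for all `T`, `U`. -/
def IsInsular {R X M : Type*} [Ring R] [MetricSpace X] [AddCommGroup M] [Module R M]
    (F : Set X → Submodule R M) (d : ℝ) : Prop :=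
  ∀ T U : Set X, F T ⊓ F U ≤ F (enl T d ∩ enl U d)

lemma enl_mono_set {X : Type*} [MetricSpace X] {S T : Set X} (h : S ⊆ T) (D : ℝ) :
    enl S D ⊆ enl T D := fun x ⟨s, hs, hdist⟩ => ⟨s, h hs, hdist⟩

lemma enl_mono_rad {X : Type*} [MetricSpace X] (S : Set X) {a b : ℝ} (h : a ≤ b) :
    enl S a ⊆ enl S b := fun x ⟨s, hs, hdist⟩ => ⟨s, hs, hdist.trans h⟩

lemma enl_enl {X : Type*} [MetricSpace X] (S : Set X) (a c : ℝ) :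
    enl (enl S a) c ⊆ enl S (a + c) := by
  rintro x ⟨v, ⟨s, hs, h1⟩, h2⟩
  exact ⟨s, hs, by have := dist_triangle x v s; linarith⟩

lemma enl_union {X : Type*} [MetricSpace X] (S T : Set X) (D : ℝ) :
    enl (S ∪ T) D = enl S D ∪ enl T D := by
  ext x
  constructor
  · rintro ⟨s, hs | hs, hdist⟩
    · exact Or.inl ⟨s, hs, hdist⟩
    · exact Or.inr ⟨s, hs, hdist⟩
  · rintro (⟨s, hs, hdist⟩ | ⟨s, hs, hdist⟩)
    exacts [⟨s, Or.inl hs, hdist⟩, ⟨s, Or.inr hs, hdist⟩]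

lemma closedBall_subset_enl {X : Type*} [MetricSpace X] {S : Set X} {v : X} {a : ℝ}
    (hv : v ∈ enl S a) (D : ℝ) : Metric.closedBall v D ⊆ enl S (a + D) := by
  obtain ⟨s, hs, h1⟩ := hv
  intro x hx
  rw [Metric.mem_closedBall] at hx
  exact ⟨s, hs, by have := dist_triangle x v s; linarith⟩

theorem insular_quotient
    {R X M' M M'' : Type*} [Ring R] [MetricSpace X]
    [AddCommGroup M'] [Module R M'] [AddCommGroup M] [Module R M]
    [AddCommGroup M''] [Module R M'']
    (F' : Set X → Submodule R M') (F : Set X → Submodule R M)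
    (F'' : Set X → Submodule R M'')
    (hF' : IsXFiltration F') (hF : IsXFiltration F) (hF'' : IsXFiltration F'')
    (f : M' →ₗ[R] M) (g : M →ₗ[R] M'') (b : ℝ) (hb : 0 ≤ b)
    (hfb : BddBictrl F' F f b) (hgb : BddBictrl F F'' g b)
    (hfi : Function.Injective f) (hgs : Function.Surjective g)
    (hex : LinearMap.range f = LinearMap.ker g)
    (D d : ℝ) (hD : 0 ≤ D) (hd : 0 ≤ d)
    (hlean' : IsLean F' D) (hins : IsInsular F d) :
    IsInsular F'' (4*b + D + d) := by
  intro T U z hz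
  rw [Submodule.mem_inf] at hz
  have hrg : z ∈ LinearMap.range g := LinearMap.range_eq_top.mpr hgs ▸ Submodule.mem_top
  -- lift z over T and over U
  obtain ⟨x, hx, hgx⟩ := hgb.2 T (Submodule.mem_inf.mpr ⟨hrg, hz.1⟩)
  obtain ⟨y, hy, hgy⟩ := hgb.2 U (Submodule.mem_inf.mpr ⟨hrg, hz.2⟩)
  -- x - y is in the image of f
  have hxyr : x - y ∈ LinearMap.range f := by
    rw [hex, LinearMap.mem_ker, map_sub, hgx, hgy, sub_self]
  have hxyF : x - y ∈ F (enl (T ∪ U) b) := by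
    rw [enl_union]
    exact sub_mem (hF.1 Set.subset_union_left hx) (hF.1 Set.subset_union_right hy)
  obtain ⟨w, hw, hfw⟩ := hfb.2 (enl (T ∪ U) b) (Submodule.mem_inf.mpr ⟨hxyr, hxyF⟩)
  have hw2 : w ∈ F' (enl (T ∪ U) (b + b)) := hF'.1 (enl_enl _ _ _) hw
  -- use leanness to split w
  have hwsup := hlean' _ hw2
  rw [enl_union, iSup_union] at hwsup
  obtain ⟨w₁, hw₁, w₂, hw₂, hsum⟩ := Submodule.mem_sup.mp hwsup
  have hw₁' : w₁ ∈ F' (enl T (b + b + D)) :=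
    iSup₂_le (fun v hv => hF'.1 (closedBall_subset_enl hv D)) hw₁
  have hw₂' : w₂ ∈ F' (enl U (b + b + D)) :=
    iSup₂_le (fun v hv => hF'.1 (closedBall_subset_enl hv D)) hw₂
  have hfw₁ : f w₁ ∈ F (enl T (b + b + D + b)) :=
    hF.1 (enl_enl _ _ _) (hfb.1 _ ⟨w₁, hw₁', rfl⟩)
  have hfw₂ : f w₂ ∈ F (enl U (b + b + D + b)) :=
    hF.1 (enl_enl _ _ _) (hfb.1 _ ⟨w₂, hw₂', rfl⟩)
  -- the corrected lift x' = x - f w₁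
  have hkey : x - f w₁ = y + f w₂ := by
    have h2 : x - y = f w₁ + f w₂ := by rw [← map_add, hsum]; exact hfw.symm
    have h3 : x = f w₁ + f w₂ + y := eq_add_of_sub_eq h2
    rw [h3]; abel
  have hx'T : x - f w₁ ∈ F (enl T (b + b + D + b)) :=
    sub_mem (hF.1 (enl_mono_rad T (by linarith)) hx) hfw₁
  have hx'U : x - f w₁ ∈ F (enl U (b + b + D + b)) := by
    rw [hkey]
    exact add_mem (hF.1 (enl_mono_rad U (by linarith)) hy) hfw₂
  have hx'ins := hins _ _ (Submodule.mem_inf.mpr ⟨hx'T, hx'U⟩)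
  have hx'ins2 : x - f w₁ ∈ F (enl T (b + b + D + b + d) ∩ enl U (b + b + D + b + d)) :=
    hF.1 (Set.inter_subset_inter (enl_enl _ _ _) (enl_enl _ _ _)) hx'ins
  -- g maps the corrected lift to z
  have hgfw₁ : g (f w₁) = 0 := by
    have : f w₁ ∈ LinearMap.ker g := hex ▸ ⟨w₁, rfl⟩
    exact this
  have hgx' : g (x - f w₁) = z := by rw [map_sub, hgfw₁, hgx, sub_zero]
  have hzmem := hgb.1 _ ⟨x - f w₁, hx'ins2, hgx'⟩
  refine hF''.1 ?_ hzmem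
  intro p hp
  obtain ⟨s, ⟨hsT, hsU⟩, hps⟩ := hp
  constructor
  · exact enl_mono_rad T (by linarith) (enl_enl T _ _ ⟨s, hsT, hps⟩)
  · exact enl_mono_rad U (by linarith) (enl_enl U _ _ ⟨s, hsU, hps⟩)
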